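/- Validity of the five-decision testing procedure: Let μ_θ (for θ ∈ ℝ) be a family of probability measures on ℝ with cumulative distribution functions F_θ(t) = μ_θ((−∞, t]), which is stochastically monotone: θ₁ ≤ θ₂ implies F_{θ₂}(t) ≤ F_{θ₁}(t) for all t. Let θ₀ ∈ ℝ, 0 < α ≤ 1/2, and let q₁, q₂, q₃, q₄ satisfy F_{θ₀}(q₁) = α/2, F_{θ₀}(q₂) = α, F_{θ₀}(q₃) = 1 − α, F_{θ₀}(q₄) = 1 − α/2, with μ_{θ₀}({q₁}) = 0. Define the wrong-rejection probability at θ as: μ_θ((−∞, q₂)) if θ > θ₀; μ_{θ₀}((−∞, q₁)) + μ_{θ₀}((q₄, ∞)) if θ = θ₀; and μ_θ((q₃, ∞)) if θ < θ₀. Then for every θ ∈ ℝ, the wrong-rejection probability at θ is at most α. -/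
import Mathlib


open MeasureTheory Set

lemma iic_add_ioi (ν : Measure ℝ) [IsProbabilityMeasure ν] (t : ℝ) :
    (ν (Iic t)).toReal + (ν (Ioi t)).toReal = 1 := by
  have h : ν (Iic t) + ν (Ioi t) = 1 := by
    rw [← measure_union (Iic_disjoint_Ioi le_rfl) measurableSet_Ioi, Iic_union_Ioi,
      measure_univ]
  have h1 : ν (Iic t) ≠ ⊤ := measure_ne_top ν _
  have h2 : ν (Ioi t) ≠ ⊤ := measure_ne_top ν _
  rw [← ENNReal.toReal_add h1 h2, h, ENNReal.toReal_one]

/-- validity of the five-decision testing procedure: whatever the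
true value of θ, the probability of a wrong rejection is at most α. -/
theorem five_decision_valid
    (μ : ℝ → Measure ℝ) [∀ θ, IsProbabilityMeasure (μ θ)]
    (hmono : ∀ θ₁ θ₂ : ℝ, θ₁ ≤ θ₂ → ∀ t : ℝ,
      ((μ θ₂) (Iic t)).toReal ≤ ((μ θ₁) (Iic t)).toReal)
    (θ₀ : ℝ) (α : ℝ) (hα0 : 0 < α) (hα : α ≤ 1 / 2)
    (q₁ q₂ q₃ q₄ : ℝ)
    (h1 : ((μ θ₀) (Iic q₁)).toReal = α / 2)
    (h2 : ((μ θ₀) (Iic q₂)).toReal = α)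
    (h3 : ((μ θ₀) (Iic q₃)).toReal = 1 - α)
    (h4 : ((μ θ₀) (Iic q₄)).toReal = 1 - α / 2)
    (hatom : (μ θ₀) {q₁} = 0) :
    ∀ θ : ℝ,
      (if θ₀ < θ then ((μ θ) (Iio q₂)).toReal
       else if θ = θ₀ then ((μ θ₀) (Iio q₁)).toReal + ((μ θ₀) (Ioi q₄)).toReal
       else ((μ θ) (Ioi q₃)).toReal) ≤ α := by
  intro θ
  split_ifs with hgt heq
  · -- θ₀ < θ : μ θ (Iio q₂) ≤ μ θ (Iic q₂) ≤ μ θ₀ (Iic q₂) = α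
    calc ((μ θ) (Iio q₂)).toReal
        ≤ ((μ θ) (Iic q₂)).toReal := by
          apply ENNReal.toReal_mono (measure_ne_top _ _)
          exact measure_mono Iio_subset_Iic_self
      _ ≤ ((μ θ₀) (Iic q₂)).toReal := hmono θ₀ θ hgt.le q₂
      _ = α := h2
  · -- θ = θ₀
    have hio : ((μ θ₀) (Iio q₁)).toReal = α / 2 := by
      have : (μ θ₀) (Iic q₁) = (μ θ₀) (Iio q₁) + (μ θ₀) {q₁} := by
        have hset : Iio q₁ ∪ {q₁} = Iic q₁ := by ext x; simp [le_iff_lt_or_eq]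
        rw [← hset, measure_union (by simp [disjoint_left]; exact fun a h => ne_of_lt h)
          (measurableSet_singleton q₁)]
      rw [this, hatom, add_zero] at h1
      exact h1
    have hoi : ((μ θ₀) (Ioi q₄)).toReal = α / 2 := by
      have := iic_add_ioi (μ θ₀) q₄
      rw [h4] at this
      linarith
    rw [hio, hoi]
    linarith
  · -- θ < θ₀
    have hle : θ ≤ θ₀ := le_of_not_gt (fun h => heq (le_antisymm (le_of_not_gt hgt) h.le))
    have key : ((μ θ₀) (Iic q₃)).toReal ≤ ((μ θ) (Iic q₃)).toReal := hmono θ θ₀ hle q₃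
    have ht := iic_add_ioi (μ θ) q₃
    rw [h3] at key
    linarith
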